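/- Let S, Y ∈ ℝ^{n×m} with S of full column rank, and let L be a matrix such that YᵀS + L is symmetric. Then ΔY = S (SᵀS)^{-1} Lᵀ satisfies ΔYᵀ S = L, and (Y + ΔY)ᵀ S is symmetric; consequently there exists a symmetric matrix A₊ with Y + ΔY = A₊ S. -/
import Mathlib


open Matrix

private lemma isUnit_of_rank_eq_card {m : ℕ} (A : Matrix (Fin m) (Fin m) ℝ)
    (h : A.rank = m) : IsUnit A := by
  rw [← Matrix.mulVec_surjective_iff_isUnit]
  have htop : LinearMap.range A.mulVecLin = ⊤ := by
    apply Submodule.eq_top_of_finrank_eq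
    rw [show Module.finrank ℝ (LinearMap.range A.mulVecLin) = A.rank from rfl, h]
    simp
  intro v
  obtain ⟨w, hw⟩ := LinearMap.range_eq_top.mp htop v
  exact ⟨w, hw⟩

/-- Schnabel's minimum-norm perturbation: if `YᵀS + L` is symmetric and `S` has full
column rank, then `ΔY = S (SᵀS)⁻¹ Lᵀ` satisfies `ΔYᵀ S = L`, the matrix `(Y + ΔY)ᵀ S`
is symmetric, and hence there is a symmetric `A₊` with `Y + ΔY = A₊ S`. -/
theorem schnabel_perturbation
    (n m : ℕ) (S Y : Matrix (Fin n) (Fin m) ℝ) (hS : S.rank = m)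
    (L : Matrix (Fin m) (Fin m) ℝ) (hL : (Yᵀ * S + L).IsSymm) :
    (S * (Sᵀ * S)⁻¹ * Lᵀ)ᵀ * S = L ∧
    ((Y + S * (Sᵀ * S)⁻¹ * Lᵀ)ᵀ * S).IsSymm ∧
    ∃ Ap : Matrix (Fin n) (Fin n) ℝ, Ap.IsSymm ∧
      Y + S * (Sᵀ * S)⁻¹ * Lᵀ = Ap * S := by
  have hrank : (Sᵀ * S).rank = m := by rw [Matrix.rank_transpose_mul_self]; exact hS
  have hU : IsUnit (Sᵀ * S) := isUnit_of_rank_eq_card _ hrank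
  have hdet : IsUnit (Sᵀ * S).det := (Matrix.isUnit_iff_isUnit_det _).mp hU
  have hinv : (Sᵀ * S)⁻¹ * (Sᵀ * S) = 1 := Matrix.nonsing_inv_mul _ hdet
  have hsymm_inv : ((Sᵀ * S)⁻¹)ᵀ = (Sᵀ * S)⁻¹ := by
    rw [Matrix.transpose_nonsing_inv, Matrix.transpose_mul, Matrix.transpose_transpose]
  have key : ∀ (k : ℕ) (M : Matrix (Fin k) (Fin m) ℝ), M * (Sᵀ * S)⁻¹ * Sᵀ * S = M := by
    intro k M
    rw [Matrix.mul_assoc (M * (Sᵀ * S)⁻¹) Sᵀ S, Matrix.mul_assoc M (Sᵀ * S)⁻¹ (Sᵀ * S),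
      hinv, Matrix.mul_one]
  have h1 : (S * (Sᵀ * S)⁻¹ * Lᵀ)ᵀ * S = L := by
    simp only [Matrix.transpose_mul, Matrix.transpose_transpose, hsymm_inv]
    calc L * ((Sᵀ * S)⁻¹ * Sᵀ) * S = L * (Sᵀ * S)⁻¹ * Sᵀ * S := by
          simp only [Matrix.mul_assoc]
      _ = L := key m L
  refine ⟨h1, ?_, ?_⟩
  · have : (Y + S * (Sᵀ * S)⁻¹ * Lᵀ)ᵀ * S = Yᵀ * S + L := by
      rw [Matrix.transpose_add, Matrix.add_mul, h1]
    rw [this]; exact hL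
  · set Z := Y + S * (Sᵀ * S)⁻¹ * Lᵀ with hZ
    have hZS : Zᵀ * S = Yᵀ * S + L := by
      rw [hZ, Matrix.transpose_add, Matrix.add_mul, h1]
    have hZSsymm : (Zᵀ * S)ᵀ = Zᵀ * S := by rw [hZS]; exact hL
    have hSZ : Sᵀ * Z = Zᵀ * S := by
      rw [Matrix.transpose_mul, Matrix.transpose_transpose] at hZSsymm
      exact hZSsymm
    refine ⟨Z * (Sᵀ * S)⁻¹ * Sᵀ + S * (Sᵀ * S)⁻¹ * Zᵀ
        - S * (Sᵀ * S)⁻¹ * (Zᵀ * S) * (Sᵀ * S)⁻¹ * Sᵀ, ?_, ?_⟩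
    · unfold Matrix.IsSymm
      simp only [Matrix.transpose_sub, Matrix.transpose_add, Matrix.transpose_mul,
        Matrix.transpose_transpose, hsymm_inv]
      rw [hSZ]
      simp only [Matrix.mul_assoc]
      abel
    · rw [Matrix.sub_mul, Matrix.add_mul]
      rw [key n Z, key n (S * (Sᵀ * S)⁻¹ * (Zᵀ * S)),
        Matrix.mul_assoc (S * (Sᵀ * S)⁻¹) Zᵀ S]
      abel
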